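/- Let R be a rooted binary tree-child network on X with |X| ≥ 2, where cherry and reticulated-cherry reductions are performed. If (R = R_0, R_1, ..., R_k) is any maximal cherry-reduction sequence for R, then R_k is a single vertex, and the unique cherry-picking sequence associated with it is tree-child; consequently tree-childness of R can be certified by computing any single maximal cherry-reduction sequence. -/

import Mathlib

/-!  Formalisation preliminaries for rooted and unrooted binary phylogenetic
networks, cherry reductions, cherry-reduction sequences and cherry-picking
sequences, following Döcker & Linz. -/

/-- A finite directed graph whose vertices are natural numbers. -/
structure DNet where
  verts : Finset ℕ
  arcs : Finset (ℕ × ℕ)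

namespace DNet

/-- in-degree of a vertex -/
def inDeg (N : DNet) (v : ℕ) : ℕ := (N.arcs.filter (fun p => p.2 = v)).card

/-- out-degree of a vertex -/
def outDeg (N : DNet) (v : ℕ) : ℕ := (N.arcs.filter (fun p => p.1 = v)).card

/-- the arc relation -/
def Arc (N : DNet) (u v : ℕ) : Prop := (u, v) ∈ N.arcs

/-- the digraph has no directed cycle -/
def Acyclic (N : DNet) : Prop := ∀ v, ¬ Relation.TransGen N.Arc v v

/-- root: in-degree 0 and out-degree 2 -/
def IsRoot (N : DNet) (v : ℕ) : Prop := v ∈ N.verts ∧ N.inDeg v = 0 ∧ N.outDeg v = 2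

/-- leaf: in-degree 1 and out-degree 0 -/
def IsLeaf (N : DNet) (v : ℕ) : Prop := v ∈ N.verts ∧ N.inDeg v = 1 ∧ N.outDeg v = 0

/-- tree vertex: in-degree 1 and out-degree 2 -/
def IsTreeVertex (N : DNet) (v : ℕ) : Prop := v ∈ N.verts ∧ N.inDeg v = 1 ∧ N.outDeg v = 2

/-- reticulation: in-degree 2 and out-degree 1 -/
def IsRet (N : DNet) (v : ℕ) : Prop := v ∈ N.verts ∧ N.inDeg v = 2 ∧ N.outDeg v = 1

/-- the network consists of a single vertex -/
def SingleVertex (N : DNet) : Prop := N.verts.card = 1 ∧ N.arcs = ∅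

/-- the reticulation number of a rooted network: number of in-degree-2 vertices -/
def retNum (N : DNet) : ℕ := (N.verts.filter (fun v => N.inDeg v = 2)).card

/-- tree-child: every vertex with a child has a child that is a tree vertex or a leaf -/
def TreeChild (N : DNet) : Prop :=
  ∀ v ∈ N.verts, N.outDeg v ≠ 0 → ∃ c, (v, c) ∈ N.arcs ∧ (N.IsTreeVertex c ∨ N.IsLeaf c)

/-- a stack: two reticulations joined by an arc -/
def HasStack (N : DNet) : Prop := ∃ u v, N.IsRet u ∧ N.IsRet v ∧ (u, v) ∈ N.arcs

/-- a pair of sibling reticulations: two reticulations with a common parent -/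
def HasSiblingRets (N : DNet) : Prop :=
  ∃ p u v, u ≠ v ∧ N.IsRet u ∧ N.IsRet v ∧ (p, u) ∈ N.arcs ∧ (p, v) ∈ N.arcs

/-- stack-free -/
def StackFree (N : DNet) : Prop := ¬ N.HasStack

end DNet

/-- `N` is a rooted binary phylogenetic network with leaf set `X`
(including the degenerate single-vertex network when `|X| = 1`). -/
def IsRootedBinaryNet (N : DNet) (X : Finset ℕ) : Prop :=
  (∃ x, X = {x} ∧ N.verts = {x} ∧ N.arcs = ∅) ∨
  ((∀ p ∈ N.arcs, p.1 ∈ N.verts ∧ p.2 ∈ N.verts) ∧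
   (∀ p ∈ N.arcs, p.1 ≠ p.2) ∧
   N.Acyclic ∧
   (∃! ρ, ρ ∈ N.verts ∧ N.inDeg ρ = 0) ∧
   (∀ v ∈ N.verts, N.IsRoot v ∨ N.IsLeaf v ∨ N.IsTreeVertex v ∨ N.IsRet v) ∧
   (∀ v, N.IsLeaf v ↔ v ∈ X))

/-- `[a,b]` is a cherry of the rooted network `N` (with `a` the leaf to be deleted). -/
def RCherry (N : DNet) (a b : ℕ) : Prop :=
  a ≠ b ∧ N.IsLeaf a ∧ N.IsLeaf b ∧ ∃ p, (p, a) ∈ N.arcs ∧ (p, b) ∈ N.arcs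

/-- `(a,b)` is a reticulated cherry of the rooted network `N` with reticulation leaf `a`:
the parent of `a` is a reticulation and receives an arc from the parent of `b`. -/
def RRetCherry (N : DNet) (a b : ℕ) : Prop :=
  a ≠ b ∧ N.IsLeaf a ∧ N.IsLeaf b ∧
  ∃ pa pb, (pa, a) ∈ N.arcs ∧ (pb, b) ∈ N.arcs ∧ N.IsRet pa ∧ (pb, pa) ∈ N.arcs

/-- `M` is obtained from the rooted network `N` by reducing the cherry `[a,b]`:
delete `a` and suppress (or, if it is the root, delete) the resulting degree-2 vertex. -/
def RReduceCherry (N M : DNet) (a b : ℕ) : Prop :=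
  RCherry N a b ∧
  ∃ p, (p, a) ∈ N.arcs ∧ (p, b) ∈ N.arcs ∧
    ((N.inDeg p = 0 ∧ M.verts = N.verts \ {a, p} ∧ M.arcs = N.arcs \ {(p, a), (p, b)}) ∨
     (∃ g, (g, p) ∈ N.arcs ∧ M.verts = N.verts \ {a, p} ∧
        M.arcs = insert (g, b) (N.arcs \ {(g, p), (p, a), (p, b)})))

/-- `M` is obtained from the rooted network `N` by reducing the reticulated cherry `(a,b)`
with reticulation leaf `a`: delete the reticulation arc `(p_b, p_a)` and suppress the two
resulting degree-2 vertices. -/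
def RReduceRetCherry (N M : DNet) (a b : ℕ) : Prop :=
  RRetCherry N a b ∧
  ∃ pa pb qa qb, (pa, a) ∈ N.arcs ∧ (pb, b) ∈ N.arcs ∧ N.IsRet pa ∧ (pb, pa) ∈ N.arcs ∧
    (qa, pa) ∈ N.arcs ∧ qa ≠ pb ∧ (qb, pb) ∈ N.arcs ∧
    M.verts = N.verts \ {pa, pb} ∧
    M.arcs = insert (qa, a) (insert (qb, b)
      (N.arcs \ {(pb, pa), (pa, a), (qa, pa), (pb, b), (qb, pb)}))

/-- A recorded reduction: either a cherry pair `[x,y]` or a reticulated-cherry pair `(x,y)`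
(the deleted leaf, resp. the reticulation leaf, is listed first). -/
inductive Pick where
  | cherry (x y : ℕ)
  | ret (x y : ℕ)
deriving DecidableEq

namespace Pick

/-- first coordinate -/
def fst : Pick → ℕ
  | cherry x _ => x
  | ret x _ => x

/-- second coordinate -/
def snd : Pick → ℕ
  | cherry _ y => y
  | ret _ y => y

/-- the pair contains the element `z` -/
def Contains (r : Pick) (z : ℕ) : Prop := r.fst = z ∨ r.snd = z

/-- the pair is a reticulated-cherry pair -/
def IsRetPair : Pick → Prop
  | cherry _ _ => False
  | ret _ _ => True

/-- the pair is a cherry pair -/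
def IsCherryPair : Pick → Prop
  | cherry _ _ => True
  | ret _ _ => False

end Pick

/-- The step from `N` to `M` is the cherry reduction recorded by the pick `r`
(rooted version). -/
def RStep (N M : DNet) : Pick → Prop
  | .cherry x y => RReduceCherry N M x y
  | .ret x y => RReduceRetCherry N M x y

/-- `(Ns 0, …, Ns k)` is a cherry-reduction sequence of rooted networks whose associated
cherry-picking sequence is `(rs 0, …, rs (k-1))`. -/
def RCherrySeq (Ns : ℕ → DNet) (rs : ℕ → Pick) (k : ℕ) : Prop :=
  ∀ i < k, RStep (Ns i) (Ns (i + 1)) (rs i)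

/-- `(Ns 0, …, Ns k)` is a cherry-reduction sequence of rooted networks. -/
def RReductionSeq (Ns : ℕ → DNet) (k : ℕ) : Prop :=
  ∀ i < k, ∃ r, RStep (Ns i) (Ns (i + 1)) r

/-- `R` is a rooted orchard network: it admits a complete cherry-reduction sequence. -/
def Orchard (R : DNet) : Prop :=
  ∃ Ns k, Ns 0 = R ∧ RReductionSeq Ns k ∧ (Ns k).SingleVertex

/-- `j = s(i)`: the smallest index `j > i` (within the sequence of length `k`) such that
`rs j` contains the first coordinate of `rs i`. -/
def SuccAt (rs : ℕ → Pick) (k i j : ℕ) : Prop :=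
  i < j ∧ j < k ∧ (rs j).Contains (rs i).fst ∧
  ∀ l, i < l → l < j → ¬ (rs l).Contains (rs i).fst

/-- Property (P1): the successor pair of every reticulated-cherry pair, if it exists,
is a cherry pair. -/
def SeqP1 (rs : ℕ → Pick) (k : ℕ) : Prop :=
  ∀ i j, (rs i).IsRetPair → SuccAt rs k i j → (rs j).IsCherryPair

/-- Property (P2): no element of the sequence is the successor pair of two distinct
reticulated-cherry pairs. -/
def SeqP2 (rs : ℕ → Pick) (k : ℕ) : Prop :=
  ∀ i i' j, i ≠ i' → (rs i).IsRetPair → (rs i').IsRetPair →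
    SuccAt rs k i j → SuccAt rs k i' j → False

/-- A tree-child cherry-picking sequence: one satisfying (P1) and (P2). -/
def TreeChildSeq (rs : ℕ → Pick) (k : ℕ) : Prop := SeqP1 rs k ∧ SeqP2 rs k

/-- Property (P3): the first coordinate of each pair does not occur as the second
coordinate of any later pair. -/
def SeqP3 (rs : ℕ → Pick) (k : ℕ) : Prop :=
  ∀ i j, i < j → j < k → (rs i).fst ≠ (rs j).snd

/-- A finite undirected graph whose vertices are natural numbers. -/
structure UNet where
  verts : Finset ℕ
  edges : Finset (Sym2 ℕ)

namespace UNet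

/-- degree of a vertex -/
def deg (U : UNet) (v : ℕ) : ℕ := (U.edges.filter (fun e => v ∈ e)).card

/-- adjacency -/
def Adj (U : UNet) (u v : ℕ) : Prop := u ≠ v ∧ s(u, v) ∈ U.edges

/-- connectedness -/
def Connected (U : UNet) : Prop :=
  ∀ u ∈ U.verts, ∀ v ∈ U.verts, Relation.ReflTransGen U.Adj u v

/-- leaf: degree-1 vertex -/
def IsLeaf (U : UNet) (v : ℕ) : Prop := v ∈ U.verts ∧ U.deg v = 1

/-- the network consists of a single vertex -/
def SingleVertex (U : UNet) : Prop := U.verts.card = 1 ∧ U.edges = ∅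

/-- the reticulation number of an unrooted network: `|E| - (|V| - 1)` -/
def retNum (U : UNet) : ℕ := U.edges.card - (U.verts.card - 1)

end UNet

/-- `U` is an unrooted binary phylogenetic network with leaf set `X`
(including the degenerate single-vertex network when `|X| = 1`). -/
def IsUnrootedBinaryNet (U : UNet) (X : Finset ℕ) : Prop :=
  (∃ x, X = {x} ∧ U.verts = {x} ∧ U.edges = ∅) ∨
  ((∀ e ∈ U.edges, ¬ e.IsDiag ∧ ∀ v ∈ e, v ∈ U.verts) ∧
   U.Connected ∧
   (∀ v ∈ U.verts, U.deg v = 1 ∨ U.deg v = 3) ∧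
   (∀ v, U.IsLeaf v ↔ v ∈ X))

/-- `[a,b]` is a cherry of the unrooted network `U`. -/
def UCherry (U : UNet) (a b : ℕ) : Prop :=
  a ≠ b ∧ U.IsLeaf a ∧ U.IsLeaf b ∧
  ((∃ p, s(a, p) ∈ U.edges ∧ s(b, p) ∈ U.edges ∧ p ≠ a ∧ p ≠ b) ∨ U.edges = {s(a, b)})

/-- the edge `{u,v}` lies on a cycle of `U` -/
def UOnCycle (U : UNet) (u v : ℕ) : Prop :=
  s(u, v) ∈ U.edges ∧
  Relation.ReflTransGen (fun x y => x ≠ y ∧ s(x, y) ∈ U.edges ∧ s(x, y) ≠ s(u, v)) u v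

/-- `(a,b)` is a reticulated cherry of the unrooted network `U` with reticulation
edge `{u,v}`. -/
def URetCherry (U : UNet) (a b : ℕ) : Prop :=
  a ≠ b ∧ U.IsLeaf a ∧ U.IsLeaf b ∧
  ∃ u v, s(a, u) ∈ U.edges ∧ s(u, v) ∈ U.edges ∧ s(v, b) ∈ U.edges ∧
    u ≠ v ∧ u ≠ a ∧ v ≠ b ∧ UOnCycle U u v

/-- `W` is obtained from `U` by reducing the cherry `[a,b]`: delete `a` and, if `U` has
at least two edges, suppress the resulting degree-2 vertex. -/
def UReduceCherry (U W : UNet) (a b : ℕ) : Prop :=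
  UCherry U a b ∧
  ((U.edges = {s(a, b)} ∧ W.verts = U.verts \ {a} ∧ W.edges = ∅) ∨
   (∃ p g, s(a, p) ∈ U.edges ∧ s(b, p) ∈ U.edges ∧ s(p, g) ∈ U.edges ∧
      p ≠ a ∧ p ≠ b ∧ g ≠ a ∧ g ≠ b ∧ g ≠ p ∧
      W.verts = U.verts \ {a, p} ∧
      W.edges = insert s(b, g) (U.edges \ {s(a, p), s(b, p), s(p, g)})))

/-- `W` is obtained from `U` by reducing the reticulated cherry `(a,b)`: delete the
reticulation edge `{u,v}` and suppress the two resulting degree-2 vertices. -/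
def UReduceRetCherry (U W : UNet) (a b : ℕ) : Prop :=
  URetCherry U a b ∧
  ∃ u v ga gb, s(a, u) ∈ U.edges ∧ s(u, v) ∈ U.edges ∧ s(v, b) ∈ U.edges ∧
    u ≠ v ∧ u ≠ a ∧ v ≠ b ∧ UOnCycle U u v ∧
    s(u, ga) ∈ U.edges ∧ ga ≠ a ∧ ga ≠ v ∧ ga ≠ u ∧
    s(v, gb) ∈ U.edges ∧ gb ≠ b ∧ gb ≠ u ∧ gb ≠ v ∧
    W.verts = U.verts \ {u, v} ∧
    W.edges = insert s(a, ga) (insert s(b, gb)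
      (U.edges \ {s(u, v), s(a, u), s(u, ga), s(v, b), s(v, gb)}))

/-- The step from `U` to `W` is the cherry reduction recorded by the pick `r`
(unrooted version). -/
def UStep (U W : UNet) : Pick → Prop
  | .cherry x y => UReduceCherry U W x y
  | .ret x y => UReduceRetCherry U W x y

/-- `(Us 0, …, Us k)` is a cherry-reduction sequence of unrooted networks whose associated
cherry-picking sequence is `(rs 0, …, rs (k-1))`. -/
def UCherrySeq (Us : ℕ → UNet) (rs : ℕ → Pick) (k : ℕ) : Prop :=
  ∀ i < k, UStep (Us i) (Us (i + 1)) (rs i)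

/-- `(Us 0, …, Us k)` is a cherry-reduction sequence of unrooted networks. -/
def UReductionSeq (Us : ℕ → UNet) (k : ℕ) : Prop :=
  ∀ i < k, ∃ r, UStep (Us i) (Us (i + 1)) r

/-- The rooted network `R` is an orientation of the unrooted network `U`: `U` is obtained
from `R` by forgetting arc directions and suppressing the root. -/
def IsOrientationOf (R : DNet) (U : UNet) : Prop :=
  (R.arcs = ∅ ∧ U.edges = ∅ ∧ U.verts = R.verts) ∨
  (∃ ρ c₁ c₂, ρ ∈ R.verts ∧ R.inDeg ρ = 0 ∧ c₁ ≠ c₂ ∧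
    (ρ, c₁) ∈ R.arcs ∧ (ρ, c₂) ∈ R.arcs ∧
    U.verts = R.verts.erase ρ ∧
    U.edges = insert s(c₁, c₂)
      ((R.arcs.filter (fun p => p.1 ≠ ρ)).image (fun p => s(p.1, p.2))))

/-- `U` is an unrooted tree-child network on `X`: it has a tree-child orientation. -/
def UnrootedTreeChild (U : UNet) (X : Finset ℕ) : Prop :=
  ∃ R : DNet, IsRootedBinaryNet R X ∧ R.TreeChild ∧ IsOrientationOf R U

/-- The pick `r` is one of the picks associated with the recorded reduction `p`:
it must agree with `p` on cherry reductions, and may swap the two coordinates of a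
reticulated-cherry reduction. -/
def PickAssoc : Pick → Pick → Prop
  | .cherry x y, r => r = .cherry x y
  | .ret x y, r => r = .ret x y ∨ r = .ret y x

/-- `X`-labelled isomorphism of unrooted networks. -/
def UIso (X : Finset ℕ) (U W : UNet) : Prop :=
  ∃ f : ℕ → ℕ, Set.BijOn f ↑U.verts ↑W.verts ∧ (∀ x ∈ X, f x = x) ∧
    W.edges = U.edges.image (Sym2.map f)


/-!
A tree-child network that is not a single vertex has a cherry or a reticulated cherry: below a
lowest vertex of out-degree two there are only leaves and reticulations. Both reductions delete a
set `D` of vertices and reroute every arc entering `D` to a vertex of in-degree one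
(`IsLocalReduction`); this keeps the network binary and tree-child, so a maximal sequence ends in
a single vertex.

Call a leaf `x` with parent `q` shielded if neither `q` nor any child of `q` is a reticulation.
Reducing a reticulated cherry `(x, y)` leaves `x` shielded by the other parent `q` of the
reticulation above `x` (by tree-childness), and this persists until `x` is picked again. A
shielded leaf lies in no reticulated cherry, which gives (P1). For (P2), if reticulated-cherry
pairs `i < i'` have the same successor `j`, the shield of the first has no reticulation child at
step `i'` while the shield of the second has one, so the two shields differ; yet both leaves hang
from the same vertex in the cherry `rs j`.
-/

open Finset Relation

theorem exists_not_transGen {α : Type*} {r : α → α → Prop} (hr : ∀ v, ¬ TransGen r v v)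
    {T : Finset α} (hT : T.Nonempty) : ∃ m ∈ T, ∀ u ∈ T, ¬ TransGen r m u := by
  let s : T → T → Prop := fun u m => TransGen r m u
  have : IsTrans T s := ⟨fun _ _ _ hab hbc => hbc.trans hab⟩
  have : Std.Irrefl s := ⟨fun a => hr a⟩
  obtain ⟨m, -, hm⟩ := (Finite.wellFounded_of_trans_of_irrefl s).has_min Set.univ
    ⟨⟨_, hT.choose_spec⟩, trivial⟩
  exact ⟨m, m.2, fun u hu => hm ⟨u, hu⟩ trivial⟩

lemma Finset.card_filter_union_sdiff {α : Type*} [DecidableEq α] {A E F : Finset α}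
    (p : α → Prop) [DecidablePred p] (hE : E ⊆ A) (hF : Disjoint F A)
    (h : #(F.filter p) = #(E.filter p)) : #((F ∪ A \ E).filter p) = #(A.filter p) := by
  have hsd : (A \ E).filter p = A.filter p \ E.filter p := by
    ext
    simp only [mem_filter, mem_sdiff]
    tauto
  have hle := card_le_card (filter_subset_filter p hE)
  rw [filter_union, card_union_of_disjoint (disjoint_filter_filter (hF.mono_right sdiff_subset)),
    hsd, card_sdiff_of_subset (filter_subset_filter p hE), h]
  omega

lemma card_filter_reroute_cherry {a b p g v : ℕ} (hva : v ≠ a) (hvp : v ≠ p) :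
    #(({(g, b)} : Finset (ℕ × ℕ)).filter (·.2 = v)) =
      #(({(g, p), (p, a), (p, b)} : Finset (ℕ × ℕ)).filter (·.2 = v)) ∧
    #(({(g, b)} : Finset (ℕ × ℕ)).filter (·.1 = v)) =
      #(({(g, p), (p, a), (p, b)} : Finset (ℕ × ℕ)).filter (·.1 = v)) := by
  constructor
  · by_cases hvb : b = v <;> simp [filter_insert, filter_singleton, hva.symm, hvp.symm, hvb]
  · by_cases hvg : g = v <;> simp [filter_insert, filter_singleton, hvp.symm, hvg]

lemma card_filter_reroute_retCherry {a b pa pb qa qb v : ℕ} (hab : a ≠ b) (hp : pa ≠ pb)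
    (hva : v ≠ pa) (hvb : v ≠ pb) :
    #(({(qa, a), (qb, b)} : Finset (ℕ × ℕ)).filter (·.2 = v)) =
      #(({(pb, pa), (pa, a), (qa, pa), (pb, b), (qb, pb)} : Finset (ℕ × ℕ)).filter
        (·.2 = v)) ∧
    #(({(qa, a), (qb, b)} : Finset (ℕ × ℕ)).filter (·.1 = v)) =
      #(({(pb, pa), (pa, a), (qa, pa), (pb, b), (qb, pb)} : Finset (ℕ × ℕ)).filter
        (·.1 = v)) := by
  constructor
  · by_cases h1 : a = v
    · subst h1
      simp [filter_insert, filter_singleton, hva.symm, hvb.symm, hab.symm]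
    · by_cases h2 : b = v <;> simp [filter_insert, filter_singleton, hva.symm, hvb.symm, h1, h2]
  · by_cases h1 : qa = v <;> by_cases h2 : qb = v <;>
      simp [filter_insert, filter_singleton, hva.symm, hvb.symm, h1, h2, hab, hp]

namespace DNet

variable {N M : DNet} {a b g p q u v w x : ℕ}

lemma inDeg_pos (h : (u, v) ∈ N.arcs) : 0 < N.inDeg v :=
  card_pos.2 ⟨_, mem_filter.2 ⟨h, rfl⟩⟩

lemma outDeg_pos (h : (u, v) ∈ N.arcs) : 0 < N.outDeg u :=
  card_pos.2 ⟨_, mem_filter.2 ⟨h, rfl⟩⟩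

lemma exists_parent (h : N.inDeg v ≠ 0) : ∃ u, (u, v) ∈ N.arcs := by
  obtain ⟨⟨u, w⟩, he⟩ := card_pos.1 (Nat.pos_of_ne_zero h)
  simp only [mem_filter] at he
  obtain ⟨he, rfl⟩ := he
  exact ⟨u, he⟩

lemma exists_ne_child (h : 1 < N.outDeg u) (v : ℕ) : ∃ w, w ≠ v ∧ (u, w) ∈ N.arcs := by
  obtain ⟨⟨u', w⟩, he, hne⟩ := exists_mem_ne h (u, v)
  simp only [mem_filter] at he
  obtain ⟨he, rfl⟩ := he
  exact ⟨w, fun h => hne (h ▸ rfl), he⟩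

lemma two_le_outDeg (hv : (u, v) ∈ N.arcs) (hw : (u, w) ∈ N.arcs) (hvw : v ≠ w) :
    2 ≤ N.outDeg u :=
  one_lt_card.2 ⟨_, mem_filter.2 ⟨hv, rfl⟩, _, mem_filter.2 ⟨hw, rfl⟩, by simpa using hvw⟩

lemma eq_of_inDeg_le_one (h : N.inDeg w ≤ 1) (hu : (u, w) ∈ N.arcs) (hv : (v, w) ∈ N.arcs) :
    u = v :=
  congrArg Prod.fst (card_le_one.1 h _ (mem_filter.2 ⟨hu, rfl⟩) _ (mem_filter.2 ⟨hv, rfl⟩))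

lemma eq_of_outDeg_le_one (h : N.outDeg u ≤ 1) (hv : (u, v) ∈ N.arcs) (hw : (u, w) ∈ N.arcs) :
    v = w :=
  congrArg Prod.snd (card_le_one.1 h _ (mem_filter.2 ⟨hv, rfl⟩) _ (mem_filter.2 ⟨hw, rfl⟩))

lemma eq_or_eq_of_inDeg_le_two (h : N.inDeg w ≤ 2) (hu : (u, w) ∈ N.arcs)
    (hv : (v, w) ∈ N.arcs) (huv : u ≠ v) (hx : (x, w) ∈ N.arcs) : x = u ∨ x = v := by
  by_contra! hne
  have : 2 < N.inDeg w := two_lt_card.2 ⟨_, mem_filter.2 ⟨hu, rfl⟩, _, mem_filter.2 ⟨hv, rfl⟩,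
    _, mem_filter.2 ⟨hx, rfl⟩, by simpa using huv, by simpa using hne.1.symm,
    by simpa using hne.2.symm⟩
  omega

lemma eq_or_eq_of_outDeg_le_two (h : N.outDeg u ≤ 2) (hv : (u, v) ∈ N.arcs)
    (hw : (u, w) ∈ N.arcs) (hvw : v ≠ w) (hx : (u, x) ∈ N.arcs) : x = v ∨ x = w := by
  by_contra! hne
  have : 2 < N.outDeg u := two_lt_card.2 ⟨_, mem_filter.2 ⟨hv, rfl⟩, _, mem_filter.2 ⟨hw, rfl⟩,
    _, mem_filter.2 ⟨hx, rfl⟩, by simpa using hvw, by simpa using hne.1.symm,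
    by simpa using hne.2.symm⟩
  omega

lemma IsLeaf.not_mem_arcs (ha : N.IsLeaf a) (v : ℕ) : (a, v) ∉ N.arcs :=
  fun hav => (outDeg_pos hav).ne' ha.2.2

lemma IsLeaf.parent_eq (ha : N.IsLeaf a) (hpa : (p, a) ∈ N.arcs) (hua : (u, a) ∈ N.arcs) :
    u = p :=
  eq_of_inDeg_le_one ha.2.1.le hua hpa

lemma Acyclic.ne_of_mem (hac : N.Acyclic) (h : (u, v) ∈ N.arcs) : u ≠ v := by
  rintro rfl
  exact hac u (.single h)

structure IsBinaryNet (N : DNet) : Prop where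
  mem_verts : ∀ {u v}, (u, v) ∈ N.arcs → u ∈ N.verts ∧ v ∈ N.verts
  acyclic : N.Acyclic
  existsUnique_root : ∃! ρ, ρ ∈ N.verts ∧ N.inDeg ρ = 0
  classify : ∀ v ∈ N.verts, N.IsRoot v ∨ N.IsLeaf v ∨ N.IsTreeVertex v ∨ N.IsRet v

namespace IsBinaryNet

lemma degree_cases (hN : N.IsBinaryNet) (hv : v ∈ N.verts) :
    N.inDeg v = 0 ∧ N.outDeg v = 2 ∨ N.inDeg v = 1 ∧ N.outDeg v = 0 ∨
      N.inDeg v = 1 ∧ N.outDeg v = 2 ∨ N.inDeg v = 2 ∧ N.outDeg v = 1 := by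
  rcases hN.classify v hv with h | h | h | h
  exacts [.inl h.2, .inr (.inl h.2), .inr (.inr (.inl h.2)), .inr (.inr (.inr h.2))]

lemma eq_or_eq_of_mem_arcs (hN : N.IsBinaryNet) (hv : (u, v) ∈ N.arcs) (hw : (u, w) ∈ N.arcs)
    (hvw : v ≠ w) (hx : (u, x) ∈ N.arcs) : x = v ∨ x = w :=
  eq_or_eq_of_outDeg_le_two
    (by rcases hN.degree_cases (hN.mem_verts hv).1 with h | h | h | h <;> omega) hv hw hvw hx

lemma inDeg_le_one_of_mem_arcs (hN : N.IsBinaryNet) (hv : (u, v) ∈ N.arcs)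
    (hw : (u, w) ∈ N.arcs) (hvw : v ≠ w) : N.inDeg u ≤ 1 := by
  have := two_le_outDeg hv hw hvw
  rcases hN.degree_cases (hN.mem_verts hv).1 with h | h | h | h <;> omega

lemma treeChild_iff (hN : N.IsBinaryNet) : N.TreeChild ↔
    ∀ v ∈ N.verts, N.outDeg v ≠ 0 → ∃ c, (v, c) ∈ N.arcs ∧ N.inDeg c = 1 := by
  have key : ∀ c ∈ N.verts, N.IsTreeVertex c ∨ N.IsLeaf c ↔ N.inDeg c = 1 := by
    intro c hc
    simp only [IsTreeVertex, IsLeaf, hc, true_and]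
    rcases hN.degree_cases hc with h | h | h | h <;> omega
  refine forall₂_congr fun v _ => imp_congr_right fun _ => exists_congr fun c => ?_
  exact and_congr_right fun hvc => key c (hN.mem_verts hvc).2

theorem exists_rCherry_or_rRetCherry (hN : N.IsBinaryNet) (htc : N.TreeChild) :
    (∃ a b, RCherry N a b) ∨ ∃ a b, RRetCherry N a b := by
  rw [hN.treeChild_iff] at htc
  obtain ⟨ρ, ⟨hρ, hρ0⟩, -⟩ := hN.existsUnique_root
  have hρS : ρ ∈ N.verts.filter (N.outDeg · = 2) := by
    rw [mem_filter]
    rcases hN.degree_cases hρ with h | h | h | h <;> first | exact ⟨hρ, h.2⟩ | omega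
  -- `w` is a lowest vertex of out-degree two
  obtain ⟨w, hwS, hw⟩ := exists_not_transGen hN.acyclic ⟨ρ, hρS⟩
  obtain ⟨hwv, hw2⟩ := mem_filter.1 hwS
  have hleaf : ∀ c, TransGen N.Arc w c → N.inDeg c = 1 → N.IsLeaf c := by
    intro c hwc hc
    obtain ⟨_, _, hbc⟩ := TransGen.tail'_iff.1 hwc
    have hcv := (hN.mem_verts hbc).2
    refine ⟨hcv, hc, ?_⟩
    have : N.outDeg c ≠ 2 := fun h2 => hw c (mem_filter.2 ⟨hcv, h2⟩) hwc
    rcases hN.degree_cases hcv with h | h | h | h <;> omega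
  obtain ⟨c, hwc, hc⟩ := htc w hwv (by omega)
  have hcl := hleaf c (.single hwc) hc
  obtain ⟨d, hdc, hwd⟩ := exists_ne_child (show 1 < N.outDeg w by omega) c
  have hdv := (hN.mem_verts hwd).2
  rcases hN.degree_cases hdv with hd | hd | hd | hd
  · exact absurd hd.1 (inDeg_pos hwd).ne'
  · exact .inl ⟨d, c, hdc, ⟨hdv, hd⟩, hcl, w, hwd, hwc⟩
  · exact absurd (mem_filter.2 ⟨hdv, hd.2⟩) (hw d · (.single hwd))
  · obtain ⟨e, hde, he⟩ := htc d hdv (by omega)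
    have hec : e ≠ c := by
      rintro rfl
      exact hN.acyclic.ne_of_mem hwd (eq_of_inDeg_le_one he.le hwc hde)
    exact .inr ⟨e, c, hec, hleaf e (.tail (.single hwd) hde) he, hcl, d, w, hde, hwc,
      ⟨hdv, hd⟩, hwd⟩

theorem eq_of_root_cherry (hN : N.IsBinaryNet) (hab : a ≠ b) (ha : N.IsLeaf a)
    (hb : N.IsLeaf b) (hpa : (p, a) ∈ N.arcs) (hpb : (p, b) ∈ N.arcs) (hp0 : N.inDeg p = 0) :
    N.verts = {p, a, b} ∧ N.arcs = {(p, a), (p, b)} := by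
  have hp := (hN.mem_verts hpa).1
  obtain ⟨ρ, -, huniq⟩ := hN.existsUnique_root
  have hV : N.verts = {p, a, b} := by
    refine Subset.antisymm (fun v hv => ?_) (by simp [insert_subset_iff, hp, ha.1, hb.1])
    by_contra hv'
    -- a source of the vertices outside `{p, a, b}` would be a second root
    obtain ⟨m, hm, hmin⟩ := exists_not_transGen (r := Function.swap N.Arc)
      (fun v h => hN.acyclic v (transGen_swap.1 h)) (T := N.verts \ {p, a, b})
      ⟨v, mem_sdiff.2 ⟨hv, hv'⟩⟩
    rw [mem_sdiff] at hm
    obtain ⟨u, hu⟩ := exists_parent fun h0 =>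
      hm.2 (by simp [(huniq m ⟨hm.1, h0⟩).trans (huniq p ⟨hp, hp0⟩).symm])
    have hu' : u ∈ ({p, a, b} : Finset ℕ) := by
      by_contra hu'
      exact hmin u (mem_sdiff.2 ⟨(hN.mem_verts hu).1, hu'⟩) (.single hu)
    simp only [mem_insert, mem_singleton] at hu'
    rcases hu' with rfl | rfl | rfl
    · rcases hN.eq_or_eq_of_mem_arcs hpa hpb hab hu with rfl | rfl <;> simp at hm
    · exact ha.not_mem_arcs m hu
    · exact hb.not_mem_arcs m hu
  refine ⟨hV, Subset.antisymm (fun ⟨u, w⟩ huw => ?_) (by simp [insert_subset_iff, hpa, hpb])⟩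
  have hu := (hN.mem_verts huw).1
  simp only [hV, mem_insert, mem_singleton] at hu
  rcases hu with rfl | rfl | rfl
  · rcases hN.eq_or_eq_of_mem_arcs hpa hpb hab huw with rfl | rfl <;> simp
  · exact absurd huw (ha.not_mem_arcs w)
  · exact absurd huw (hb.not_mem_arcs w)

end IsBinaryNet

def IsTreeChildNet (N : DNet) : Prop := N.TreeChild ∧ (N.SingleVertex ∨ N.IsBinaryNet)

lemma SingleVertex.isTreeChildNet (h : N.SingleVertex) : N.IsTreeChildNet :=
  ⟨fun _ _ hv => absurd (by simp [outDeg, h.2]) hv, .inl h⟩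

lemma IsTreeChildNet.isBinaryNet (hN : N.IsTreeChildNet) (h : (u, v) ∈ N.arcs) :
    N.IsBinaryNet :=
  hN.2.resolve_left fun hs => by simp [hs.2] at h

theorem IsTreeChildNet.singleVertex (hN : N.IsTreeChildNet)
    (hmax : ∀ a b, ¬ RCherry N a b ∧ ¬ RRetCherry N a b) : N.SingleVertex := by
  refine hN.2.resolve_right fun hB => ?_
  rcases hB.exists_rCherry_or_rRetCherry hN.1 with ⟨a, b, h⟩ | ⟨a, b, h⟩
  exacts [(hmax a b).1 h, (hmax a b).2 h]

def Shielded (N : DNet) (x q : ℕ) : Prop :=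
  N.IsLeaf x ∧ (q, x) ∈ N.arcs ∧ N.inDeg q ≤ 1 ∧ ∀ c, (q, c) ∈ N.arcs → N.inDeg c ≤ 1

lemma Shielded.parent_eq (h : N.Shielded x q) (hux : (u, x) ∈ N.arcs) : u = q :=
  h.1.parent_eq h.2.1 hux

lemma Shielded.ne_of_rRetCherry (h : N.Shielded x q) (hr : RRetCherry N u v) :
    u ≠ x ∧ v ≠ x := by
  obtain ⟨-, -, -, pa, pb, hpa, hpb, hret, hpbpa⟩ := hr
  constructor
  · rintro rfl
    have := h.2.2.1
    rw [← h.parent_eq hpa, hret.2.1] at this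
    omega
  · rintro rfl
    have := h.2.2.2 pa (h.parent_eq hpb ▸ hpbpa)
    rw [hret.2.1] at this
    omega

structure IsLocalReduction (N M : DNet) (D : Finset ℕ) : Prop where
  verts_eq : M.verts = N.verts \ D
  inDeg_eq : ∀ v ∉ D, M.inDeg v = N.inDeg v
  outDeg_eq : ∀ v ∉ D, M.outDeg v = N.outDeg v
  inDeg_ne_zero : ∀ d ∈ D, N.inDeg d ≠ 0
  transGen_of_mem : ∀ {u w}, (u, w) ∈ M.arcs → TransGen N.Arc u w
  not_mem_of_mem : ∀ {u w}, (u, w) ∈ M.arcs → u ∉ D ∧ w ∉ D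
  mem_of_mem : ∀ {u w}, (u, w) ∈ N.arcs → u ∉ D → w ∉ D → (u, w) ∈ M.arcs
  inDeg_eq_one_of_new : ∀ {u w}, (u, w) ∈ M.arcs → (u, w) ∉ N.arcs → N.inDeg w = 1
  reroute : ∀ {u d}, (u, d) ∈ N.arcs → u ∉ D → d ∈ D → ∃ w, (u, w) ∈ M.arcs ∧ (u, w) ∉ N.arcs

namespace IsLocalReduction

variable {D : Finset ℕ}

theorem of_arcs_eq {E F : Finset (ℕ × ℕ)} (hMv : M.verts = N.verts \ D)
    (hMa : M.arcs = F ∪ N.arcs \ E) (hEN : E ⊆ N.arcs)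
    (hE : ∀ {u w}, (u, w) ∈ N.arcs → ((u, w) ∈ E ↔ u ∈ D ∨ w ∈ D))
    (hF : ∀ {u w}, (u, w) ∈ F →
      u ∉ D ∧ w ∉ D ∧ (u, w) ∉ N.arcs ∧ TransGen N.Arc u w ∧ N.inDeg w = 1)
    (hdeg : ∀ v ∉ D, #(F.filter (·.2 = v)) = #(E.filter (·.2 = v)) ∧
      #(F.filter (·.1 = v)) = #(E.filter (·.1 = v)))
    (hroute : ∀ {u d}, (u, d) ∈ N.arcs → u ∉ D → d ∈ D → ∃ w, (u, w) ∈ F)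
    (hD : ∀ d ∈ D, N.inDeg d ≠ 0) : IsLocalReduction N M D := by
  have hFN : Disjoint F N.arcs :=
    disjoint_left.2 fun {e} he => by obtain ⟨u, w⟩ := e; exact (hF he).2.2.1
  have hmem : ∀ {u w}, (u, w) ∈ M.arcs ↔ (u, w) ∈ F ∨ (u, w) ∈ N.arcs ∧ u ∉ D ∧ w ∉ D := by
    intro u w
    rw [hMa, mem_union, mem_sdiff]
    exact or_congr_right ⟨fun h => ⟨h.1, not_or.1 ((hE h.1).not.1 h.2)⟩,
      fun h => ⟨h.1, (hE h.1).not.2 (not_or.2 h.2)⟩⟩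
  refine ⟨hMv, fun v hv => ?_, fun v hv => ?_, hD, fun huw => ?_, fun huw => ?_,
    fun huw hu hw => hmem.2 (.inr ⟨huw, hu, hw⟩), fun huw hnew => ?_, fun hud hu hd => ?_⟩
  · rw [inDeg, inDeg, hMa]
    exact card_filter_union_sdiff _ hEN hFN (hdeg v hv).1
  · rw [outDeg, outDeg, hMa]
    exact card_filter_union_sdiff _ hEN hFN (hdeg v hv).2
  · rcases hmem.1 huw with h | h
    exacts [(hF h).2.2.2.1, .single h.1]
  · rcases hmem.1 huw with h | h
    exacts [⟨(hF h).1, (hF h).2.1⟩, h.2]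
  · rcases hmem.1 huw with h | h
    exacts [(hF h).2.2.2.2, absurd h.1 hnew]
  · obtain ⟨w, huw⟩ := hroute hud hu hd
    exact ⟨w, hmem.2 (.inl huw), (hF huw).2.2.1⟩

lemma mem_verts (h : IsLocalReduction N M D) (hv : v ∈ N.verts) (hD : v ∉ D) : v ∈ M.verts :=
  h.verts_eq ▸ mem_sdiff.2 ⟨hv, hD⟩

theorem isBinaryNet (h : IsLocalReduction N M D) (hN : N.IsBinaryNet) : M.IsBinaryNet where
  mem_verts huw := by
    obtain ⟨hu, hw⟩ := h.not_mem_of_mem huw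
    obtain ⟨_, h1, _⟩ := TransGen.head'_iff.1 (h.transGen_of_mem huw)
    obtain ⟨_, _, h2⟩ := TransGen.tail'_iff.1 (h.transGen_of_mem huw)
    exact ⟨h.mem_verts (hN.mem_verts h1).1 hu, h.mem_verts (hN.mem_verts h2).2 hw⟩
  acyclic v hv := hN.acyclic v (TransGen.lift' id (fun _ _ => h.transGen_of_mem) _ _ hv)
  existsUnique_root := by
    obtain ⟨ρ, ⟨hρ, hρ0⟩, huniq⟩ := hN.existsUnique_root
    have hρD : ρ ∉ D := fun hD => h.inDeg_ne_zero ρ hD hρ0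
    refine ⟨ρ, ⟨h.mem_verts hρ hρD, (h.inDeg_eq ρ hρD).trans hρ0⟩, ?_⟩
    rintro v ⟨hv, hv0⟩
    rw [h.verts_eq, mem_sdiff] at hv
    exact huniq v ⟨hv.1, (h.inDeg_eq v hv.2).symm.trans hv0⟩
  classify v hv := by
    have hv' := hv
    rw [h.verts_eq, mem_sdiff] at hv'
    simp only [IsRoot, IsLeaf, IsTreeVertex, IsRet, hv, h.inDeg_eq v hv'.2,
      h.outDeg_eq v hv'.2, true_and]
    exact hN.degree_cases hv'.1

theorem treeChild (h : IsLocalReduction N M D) (hN : N.IsBinaryNet) (htc : N.TreeChild) :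
    M.TreeChild := by
  rw [hN.treeChild_iff] at htc
  rw [(h.isBinaryNet hN).treeChild_iff]
  intro v hv hv0
  rw [h.verts_eq, mem_sdiff] at hv
  obtain ⟨c, hvc, hc⟩ := htc v hv.1 (h.outDeg_eq v hv.2 ▸ hv0)
  by_cases hcD : c ∈ D
  · obtain ⟨w, hvw, hnew⟩ := h.reroute hvc hv.2 hcD
    exact ⟨w, hvw,
      (h.inDeg_eq w (h.not_mem_of_mem hvw).2).trans (h.inDeg_eq_one_of_new hvw hnew)⟩
  · exact ⟨c, h.mem_of_mem hvc hv.2 hcD, (h.inDeg_eq c hcD).trans hc⟩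

lemma isTreeChildNet (h : IsLocalReduction N M D) (hN : N.IsBinaryNet) (htc : N.TreeChild) :
    M.IsTreeChildNet :=
  ⟨h.treeChild hN htc, .inr (h.isBinaryNet hN)⟩

theorem shielded (h : IsLocalReduction N M D) (hsh : N.Shielded x q) (hx : x ∉ D)
    (hq : q ∉ D) : M.Shielded x q := by
  obtain ⟨⟨hxv, hx1, hx0⟩, hqx, hq1, hqc⟩ := hsh
  refine ⟨⟨h.mem_verts hxv hx, (h.inDeg_eq x hx).trans hx1, (h.outDeg_eq x hx).trans hx0⟩,
    h.mem_of_mem hqx hq hx, (h.inDeg_eq q hq).trans_le hq1, fun c hc => ?_⟩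
  rw [h.inDeg_eq c (h.not_mem_of_mem hc).2]
  by_cases hN : (q, c) ∈ N.arcs
  · exact hqc c hN
  · exact (h.inDeg_eq_one_of_new hc hN).le

end IsLocalReduction

theorem isLocalReduction_of_reduceCherry (hN : N.IsBinaryNet) (hab : a ≠ b) (ha : N.IsLeaf a)
    (hb : N.IsLeaf b) (hpa : (p, a) ∈ N.arcs) (hpb : (p, b) ∈ N.arcs) (hgp : (g, p) ∈ N.arcs)
    (hMv : M.verts = N.verts \ {a, p})
    (hMa : M.arcs = insert (g, b) (N.arcs \ {(g, p), (p, a), (p, b)})) :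
    IsLocalReduction N M {a, p} := by
  have hgp' : g ≠ p := hN.acyclic.ne_of_mem hgp
  have hpa' : p ≠ a := hN.acyclic.ne_of_mem hpa
  have hpb' : p ≠ b := hN.acyclic.ne_of_mem hpb
  have hga : g ≠ a := by rintro rfl; exact ha.not_mem_arcs p hgp
  have hgbN : (g, b) ∉ N.arcs := fun h => hgp' (hb.parent_eq hpb h)
  have hppar : ∀ u, (u, p) ∈ N.arcs → u = g :=
    fun u hu => eq_of_inDeg_le_one (hN.inDeg_le_one_of_mem_arcs hpa hpb hab) hu hgp
  refine .of_arcs_eq (E := {(g, p), (p, a), (p, b)}) hMv (by rw [hMa, insert_eq])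
    (by simp [insert_subset_iff, hgp, hpa, hpb]) (fun {u w} huw => ?_) (fun {u w} huw => ?_)
    (fun v hv => ?_) (fun {u d} hud hu hd => ?_) ?_
  · simp only [mem_insert, mem_singleton, Prod.mk.injEq]
    constructor
    · rintro (⟨rfl, rfl⟩ | ⟨rfl, rfl⟩ | ⟨rfl, rfl⟩) <;> simp
    · rintro ((rfl | rfl) | (rfl | rfl))
      · exact absurd huw (ha.not_mem_arcs w)
      · rcases hN.eq_or_eq_of_mem_arcs hpa hpb hab huw with rfl | rfl <;> simp
      · simp [ha.parent_eq hpa huw]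
      · simp [hppar u huw]
  · obtain ⟨rfl, rfl⟩ := Prod.mk.inj (mem_singleton.1 huw)
    simp only [mem_insert, mem_singleton, not_or]
    exact ⟨⟨hga, hgp'⟩, ⟨hab.symm, hpb'.symm⟩, hgbN, .tail (.single hgp) hpb, hb.2.1⟩
  · simp only [mem_insert, mem_singleton, not_or] at hv
    exact card_filter_reroute_cherry hv.1 hv.2
  · simp only [mem_insert, mem_singleton, not_or] at hu hd
    rcases hd with rfl | rfl
    · exact absurd (ha.parent_eq hpa hud) hu.2
    · exact ⟨b, by simp [hppar u hud]⟩
  · simp only [mem_insert, mem_singleton, forall_eq_or_imp, forall_eq, ha.2.1]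
    exact ⟨one_ne_zero, (inDeg_pos hgp).ne'⟩

theorem RReduceCherry.isTreeChildNet (hN : N.IsTreeChildNet) (h : RReduceCherry N M a b) :
    M.IsTreeChildNet := by
  obtain ⟨⟨hab, ha, hb, -⟩, p, hpa, hpb, ⟨hp0, hMv, hMa⟩ | ⟨g, hgp, hMv, hMa⟩⟩ := h
  · obtain ⟨hV, hA⟩ := (hN.isBinaryNet hpa).eq_of_root_cherry hab ha hb hpa hpb hp0
    refine SingleVertex.isTreeChildNet ⟨card_eq_one.2 ⟨b, ?_⟩, by simp [hMa, hA]⟩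
    have hpb' : p ≠ b := (hN.isBinaryNet hpa).acyclic.ne_of_mem hpb
    ext v
    simp only [hMv, hV, mem_sdiff, mem_insert, mem_singleton]
    constructor
    · tauto
    · rintro rfl
      tauto
  · exact (isLocalReduction_of_reduceCherry (hN.isBinaryNet hpa) hab ha hb hpa hpb hgp hMv hMa
      ).isTreeChildNet (hN.isBinaryNet hpa) hN.1

theorem RReduceCherry.shielded (hN : N.IsTreeChildNet) (h : RReduceCherry N M a b)
    (hsh : N.Shielded x q) (hxa : x ≠ a) (hxb : x ≠ b) : M.Shielded x q := by
  obtain ⟨⟨hab, ha, hb, -⟩, p, hpa, hpb, ⟨hp0, -, -⟩ | ⟨g, hgp, hMv, hMa⟩⟩ := h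
  · have hx := hsh.1.1
    simp only [((hN.isBinaryNet hpa).eq_of_root_cherry hab ha hb hpa hpb hp0).1, mem_insert,
      mem_singleton, hxa, hxb, or_false] at hx
    exact absurd (hx ▸ hsh.1.2.2) (outDeg_pos hpa).ne'
  · have hB := hN.isBinaryNet hpa
    refine (isLocalReduction_of_reduceCherry hB hab ha hb hpa hpb hgp hMv hMa).shielded hsh ?_ ?_
    · simp only [mem_insert, mem_singleton, not_or]
      exact ⟨hxa, fun hxp => hsh.1.not_mem_arcs a (hxp ▸ hpa)⟩
    · simp only [mem_insert, mem_singleton, not_or]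
      refine ⟨fun hqa => ha.not_mem_arcs x (hqa ▸ hsh.2.1), fun hqp => ?_⟩
      rcases hB.eq_or_eq_of_mem_arcs hpa hpb hab (hqp ▸ hsh.2.1) with h | h
      exacts [hxa h, hxb h]

theorem isLocalReduction_of_reduceRetCherry {pa pb qa qb : ℕ} (hN : N.IsBinaryNet) (hab : a ≠ b)
    (ha : N.IsLeaf a) (hb : N.IsLeaf b) (hpaa : (pa, a) ∈ N.arcs) (hpbb : (pb, b) ∈ N.arcs)
    (hpa : N.IsRet pa) (hpbpa : (pb, pa) ∈ N.arcs) (hqapa : (qa, pa) ∈ N.arcs) (hqapb : qa ≠ pb)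
    (hqbpb : (qb, pb) ∈ N.arcs) (hMv : M.verts = N.verts \ {pa, pb})
    (hMa : M.arcs = insert (qa, a) (insert (qb, b)
      (N.arcs \ {(pb, pa), (pa, a), (qa, pa), (pb, b), (qb, pb)}))) :
    IsLocalReduction N M {pa, pb} := by
  have hbpa : b ≠ pa := by rintro rfl; exact hb.not_mem_arcs a hpaa
  have hapb : a ≠ pb := by rintro rfl; exact ha.not_mem_arcs b hpbb
  have hpbpa' : pb ≠ pa := hN.acyclic.ne_of_mem hpbpa
  have hqapa' : qa ≠ pa := hN.acyclic.ne_of_mem hqapa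
  have hqbpb' : qb ≠ pb := hN.acyclic.ne_of_mem hqbpb
  have hpachild : ∀ c, (pa, c) ∈ N.arcs → c = a :=
    fun c hc => eq_of_outDeg_le_one hpa.2.2.le hc hpaa
  have hpapar : ∀ u, (u, pa) ∈ N.arcs → u = pb ∨ u = qa :=
    fun u => eq_or_eq_of_inDeg_le_two hpa.2.1.le hpbpa hqapa hqapb.symm
  have hpbpar : ∀ u, (u, pb) ∈ N.arcs → u = qb :=
    fun u hu => eq_of_inDeg_le_one (hN.inDeg_le_one_of_mem_arcs hpbb hpbpa hbpa) hu hqbpb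
  have hqbpa : qb ≠ pa := by rintro rfl; exact hapb (hpachild pb hqbpb).symm
  refine .of_arcs_eq (E := {(pb, pa), (pa, a), (qa, pa), (pb, b), (qb, pb)})
    (F := {(qa, a), (qb, b)}) hMv (by rw [hMa, insert_eq, insert_eq, ← union_assoc, ← insert_eq])
    (by simp [insert_subset_iff, hpbpa, hpaa, hqapa, hpbb, hqbpb]) (fun {u w} huw => ?_)
    (fun {u w} huw => ?_) (fun v hv => ?_) (fun {u d} hud hu hd => ?_) ?_
  · simp only [mem_insert, mem_singleton, Prod.mk.injEq]
    constructor
    · rintro (⟨rfl, rfl⟩ | ⟨rfl, rfl⟩ | ⟨rfl, rfl⟩ | ⟨rfl, rfl⟩ | ⟨rfl, rfl⟩) <;> simp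
    · rintro ((rfl | rfl) | (rfl | rfl))
      · simp [hpachild w huw]
      · rcases hN.eq_or_eq_of_mem_arcs hpbb hpbpa hbpa huw with rfl | rfl <;> simp
      · rcases hpapar u huw with rfl | rfl <;> simp
      · simp [hpbpar u huw]
  · simp only [mem_insert, mem_singleton, Prod.mk.injEq, not_or] at huw ⊢
    rcases huw with ⟨rfl, rfl⟩ | ⟨rfl, rfl⟩
    · exact ⟨⟨hqapa', hqapb⟩, ⟨(hN.acyclic.ne_of_mem hpaa).symm, hapb⟩,
        fun h => hqapa' (ha.parent_eq hpaa h), .tail (.single hqapa) hpaa, ha.2.1⟩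
    · exact ⟨⟨hqbpa, hqbpb'⟩, ⟨hbpa, (hN.acyclic.ne_of_mem hpbb).symm⟩,
        fun h => hqbpb' (hb.parent_eq hpbb h), .tail (.single hqbpb) hpbb, hb.2.1⟩
  · simp only [mem_insert, mem_singleton, not_or] at hv
    exact card_filter_reroute_retCherry hab hpbpa'.symm hv.1 hv.2
  · simp only [mem_insert, mem_singleton, not_or] at hu hd
    rcases hd with rfl | rfl
    · rcases hpapar u hud with rfl | rfl
      · exact absurd rfl hu.2
      · exact ⟨a, by simp⟩
    · exact ⟨b, by simp [hpbpar u hud]⟩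
  · simp only [mem_insert, mem_singleton, forall_eq_or_imp, forall_eq, hpa.2.1]
    exact ⟨two_ne_zero, (inDeg_pos hqbpb).ne'⟩

theorem RReduceRetCherry.isTreeChildNet (hN : N.IsTreeChildNet) (h : RReduceRetCherry N M a b) :
    M.IsTreeChildNet := by
  obtain ⟨⟨hab, ha, hb, -⟩, _, _, _, _, hpaa, hpbb, hpa, hpbpa, hqapa, hqapb, hqbpb, hMv, hMa⟩ := h
  have hB := hN.isBinaryNet hpaa
  exact (isLocalReduction_of_reduceRetCherry hB hab ha hb hpaa hpbb hpa hpbpa hqapa hqapb hqbpb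
    hMv hMa).isTreeChildNet hB hN.1

theorem RReduceRetCherry.shielded (hN : N.IsTreeChildNet) (h : RReduceRetCherry N M a b)
    (hsh : N.Shielded x q) (hxa : x ≠ a) (hxb : x ≠ b) : M.Shielded x q := by
  obtain ⟨⟨hab, ha, hb, -⟩, pa, pb, _, _, hpaa, hpbb, hpa, hpbpa, hqapa, hqapb, hqbpb, hMv,
    hMa⟩ := h
  have hB := hN.isBinaryNet hpaa
  have hxpa : x ≠ pa := fun h => hsh.1.not_mem_arcs a (h ▸ hpaa)
  have hbpa : b ≠ pa := by rintro rfl; exact hb.not_mem_arcs a hpaa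
  refine (isLocalReduction_of_reduceRetCherry hB hab ha hb hpaa hpbb hpa hpbpa hqapa hqapb hqbpb
    hMv hMa).shielded hsh ?_ ?_
  · simp only [mem_insert, mem_singleton, not_or]
    exact ⟨hxpa, fun h => hsh.1.not_mem_arcs b (h ▸ hpbb)⟩
  · simp only [mem_insert, mem_singleton, not_or]
    refine ⟨fun hqpa => hxa (eq_of_outDeg_le_one hpa.2.2.le (hqpa ▸ hsh.2.1) hpaa),
      fun hqpb => ?_⟩
    rcases hB.eq_or_eq_of_mem_arcs hpbb hpbpa hbpa (hqpb ▸ hsh.2.1) with h | h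
    exacts [hxb h, hxpa h]

theorem RReduceRetCherry.exists_shielded (hN : N.IsTreeChildNet) (h : RReduceRetCherry N M a b) :
    ∃ q p, (q, p) ∈ N.arcs ∧ N.inDeg p = 2 ∧ M.Shielded a q := by
  obtain ⟨⟨hab, ha, hb, -⟩, pa, pb, qa, qb, hpaa, hpbb, hpa, hpbpa, hqapa, hqapb, hqbpb, hMv,
    hMa⟩ := h
  have hB := hN.isBinaryNet hpaa
  have hL := isLocalReduction_of_reduceRetCherry hB hab ha hb hpaa hpbb hpa hpbpa hqapa hqapb
    hqbpb hMv hMa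
  -- by tree-childness, the child of `qa` other than the reticulation `pa` has in-degree one
  obtain ⟨c, hqac, hc⟩ := (hB.treeChild_iff.1 hN.1) qa (hB.mem_verts hqapa).1
    (outDeg_pos hqapa).ne'
  have hcpa : c ≠ pa := fun h => by
    have := hpa.2.1
    rw [← h] at this
    omega
  have hqaD : qa ∉ ({pa, pb} : Finset ℕ) := by simp [hB.acyclic.ne_of_mem hqapa, hqapb]
  have haD : a ∉ ({pa, pb} : Finset ℕ) := by
    simp only [mem_insert, mem_singleton, not_or]
    exact ⟨(hB.acyclic.ne_of_mem hpaa).symm, fun h => ha.not_mem_arcs b (h ▸ hpbb)⟩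
  refine ⟨qa, pa, hqapa, hpa.2.1, ⟨hL.mem_verts ha.1 haD, (hL.inDeg_eq a haD).trans ha.2.1,
    (hL.outDeg_eq a haD).trans ha.2.2⟩, by simp [hMa], (hL.inDeg_eq qa hqaD).trans_le
    (hB.inDeg_le_one_of_mem_arcs hqac hqapa hcpa), fun d hd => ?_⟩
  rw [hL.inDeg_eq d (hL.not_mem_of_mem hd).2]
  by_cases hdN : (qa, d) ∈ N.arcs
  · rcases hB.eq_or_eq_of_mem_arcs hqac hqapa hcpa hdN with rfl | rfl
    · exact hc.le
    · exact absurd (hL.not_mem_of_mem hd).2 (by simp)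
  · exact (hL.inDeg_eq_one_of_new hd hdN).le

theorem RStep.isTreeChildNet {r : Pick} (hN : N.IsTreeChildNet) (h : RStep N M r) :
    M.IsTreeChildNet := by
  cases r with
  | cherry a b => exact RReduceCherry.isTreeChildNet hN h
  | ret a b => exact RReduceRetCherry.isTreeChildNet hN h

theorem RStep.shielded {r : Pick} (hN : N.IsTreeChildNet) (h : RStep N M r)
    (hsh : N.Shielded x q) (hx : ¬ r.Contains x) : M.Shielded x q := by
  have hxa : x ≠ r.fst := fun h => hx (.inl h.symm)
  have hxb : x ≠ r.snd := fun h => hx (.inr h.symm)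
  cases r with
  | cherry a b => exact RReduceCherry.shielded hN h hsh hxa hxb
  | ret a b => exact RReduceRetCherry.shielded hN h hsh hxa hxb

end DNet

lemma Pick.IsRetPair.exists_eq_ret {r : Pick} (h : r.IsRetPair) : ∃ x y, r = .ret x y := by
  cases r with
  | cherry => exact h.elim
  | ret x y => exact ⟨x, y, rfl⟩

lemma IsRootedBinaryNet.isTreeChildNet {R : DNet} {X : Finset ℕ} (hR : IsRootedBinaryNet R X)
    (htc : R.TreeChild) : R.IsTreeChildNet := by
  refine ⟨htc, ?_⟩
  rcases hR with ⟨x, -, hv, ha⟩ | ⟨h1, -, h3, h4, h5, -⟩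
  · exact .inl ⟨by simp [hv], ha⟩
  · exact .inr ⟨fun h => h1 _ h, h3, h4, h5⟩

namespace RCherrySeq

open DNet

variable {Ns : ℕ → DNet} {rs : ℕ → Pick} {k : ℕ}

theorem isTreeChildNet (hseq : RCherrySeq Ns rs k) (h0 : (Ns 0).IsTreeChildNet) :
    ∀ i ≤ k, (Ns i).IsTreeChildNet
  | 0, _ => h0
  | i + 1, hi => RStep.isTreeChildNet (isTreeChildNet hseq h0 i (by omega)) (hseq i (by omega))

theorem shielded (hseq : RCherrySeq Ns rs k) (hG : ∀ i ≤ k, (Ns i).IsTreeChildNet)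
    {i j x q : ℕ} (hij : i ≤ j) (hjk : j ≤ k) (hsh : (Ns i).Shielded x q)
    (hx : ∀ l, i ≤ l → l < j → ¬ (rs l).Contains x) : (Ns j).Shielded x q := by
  induction j, hij using Nat.le_induction with
  | base => exact hsh
  | succ j hij ih =>
    exact RStep.shielded (hG j (by omega)) (hseq j (by omega))
      (ih (by omega) fun l h1 h2 => hx l h1 (by omega)) (hx j hij (by omega))

theorem exists_shielded_of_succAt (hseq : RCherrySeq Ns rs k)
    (hG : ∀ i ≤ k, (Ns i).IsTreeChildNet) {i j x y : ℕ} (hri : rs i = .ret x y)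
    (hs : SuccAt rs k i j) : ∃ q, (∃ p, (q, p) ∈ (Ns i).arcs ∧ (Ns i).inDeg p = 2) ∧
      ∀ m, i < m → m ≤ j → (Ns m).Shielded x q := by
  obtain ⟨hij, hjk, -, hgap⟩ := hs
  have hstep := hseq i (by omega)
  rw [hri] at hstep
  obtain ⟨q, p, hqp, hp, hsh⟩ := RReduceRetCherry.exists_shielded (hG i (by omega)) hstep
  refine ⟨q, ⟨p, hqp, hp⟩, fun m him hmj => hseq.shielded hG him (by omega) hsh fun l h1 h2 => ?_⟩
  simpa [hri, Pick.fst] using hgap l (by omega) (by omega)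

theorem seqP1 (hseq : RCherrySeq Ns rs k) (hG : ∀ i ≤ k, (Ns i).IsTreeChildNet) :
    SeqP1 rs k := by
  intro i j hi hs
  obtain ⟨x, y, hri⟩ := hi.exists_eq_ret
  obtain ⟨q, -, hsh⟩ := hseq.exists_shielded_of_succAt hG hri hs
  cases hrj : rs j with
  | cherry => trivial
  | ret u v =>
    have hstep := hseq j hs.2.1
    rw [hrj] at hstep
    have hx := hs.2.2.1
    rw [hri, hrj] at hx
    have hne := (hsh j hs.1 le_rfl).ne_of_rRetCherry hstep.1
    rcases hx with h | h
    exacts [hne.1 h, hne.2 h]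

theorem seqP2 (hseq : RCherrySeq Ns rs k) (hG : ∀ i ≤ k, (Ns i).IsTreeChildNet) :
    SeqP2 rs k := by
  intro i i' j hne hi hi' hs hs'
  wlog hlt : i < i' generalizing i i'
  · exact this i' i hne.symm hi' hi hs' hs (by omega)
  obtain ⟨x, y, hri⟩ := hi.exists_eq_ret
  obtain ⟨x', y', hri'⟩ := hi'.exists_eq_ret
  obtain ⟨q, -, hsh⟩ := hseq.exists_shielded_of_succAt hG hri hs
  obtain ⟨q', ⟨p, hq'p, hp⟩, hsh'⟩ := hseq.exists_shielded_of_succAt hG hri' hs'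
  have hqq' : q ≠ q' := by
    rintro rfl
    have := (hsh i' hlt hs'.1.le).2.2.2 p hq'p
    omega
  have hc := hseq.seqP1 hG i j hi hs
  cases hrj : rs j with
  | ret => rw [hrj] at hc; exact hc
  | cherry u v =>
    have hstep := hseq j hs.2.1
    rw [hrj] at hstep
    obtain ⟨-, -, -, w, hwu, hwv⟩ := hstep.1
    have hparent : ∀ z, (Pick.cherry u v).Contains z → (w, z) ∈ (Ns j).arcs := by
      rintro z (rfl | rfl)
      exacts [hwu, hwv]
    have hx := hs.2.2.1
    have hx' := hs'.2.2.1
    rw [hri, hrj] at hx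
    rw [hri', hrj] at hx'
    exact hqq' (((hsh j hs.1 le_rfl).parent_eq (hparent _ hx)).symm.trans
      ((hsh' j hs'.1 le_rfl).parent_eq (hparent _ hx')))

end RCherrySeq

theorem maximal_sequence_of_treeChild_general (R : DNet) (X : Finset ℕ) (Ns : ℕ → DNet)
    (rs : ℕ → Pick) (k : ℕ) (hR : IsRootedBinaryNet R X) (htc : R.TreeChild)
    (h0 : Ns 0 = R) (hseq : RCherrySeq Ns rs k)
    (hmax : ∀ a b, ¬ RCherry (Ns k) a b ∧ ¬ RRetCherry (Ns k) a b) :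
    (Ns k).SingleVertex ∧ TreeChildSeq rs k := by
  have hG := hseq.isTreeChildNet (h0 ▸ hR.isTreeChildNet htc)
  exact ⟨(hG k le_rfl).singleVertex hmax, hseq.seqP1 hG, hseq.seqP2 hG⟩

/-- For a rooted binary tree-child network on `X` with `|X| ≥ 2`, every
maximal cherry-reduction sequence ends in a single vertex and its (unique) associated
cherry-picking sequence is tree-child. -/
theorem maximal_sequence_of_treeChild (R : DNet) (X : Finset ℕ) (Ns : ℕ → DNet)
    (rs : ℕ → Pick) (k : ℕ) (hR : IsRootedBinaryNet R X) (htc : R.TreeChild)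
    (hX : 2 ≤ X.card) (h0 : Ns 0 = R) (hseq : RCherrySeq Ns rs k)
    (hmax : ∀ a b, ¬ RCherry (Ns k) a b ∧ ¬ RRetCherry (Ns k) a b) :
    (Ns k).SingleVertex ∧ TreeChildSeq rs k :=
  maximal_sequence_of_treeChild_general R X Ns rs k hR htc h0 hseq hmax
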